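/- arXiv:2109.08764 — 2 statements merged into one kernel-verified Lean document; each statement's English description precedes it below -/
import Mathlib

section
/- Let f ∈ C_c^∞(ℝ²) and 2 ≤ p < ∞. Then ‖f‖_{L^p(ℝ²)} ≤ C(p) ‖f‖_{L²(ℝ²)}^{2/p} ‖∇f‖_{L²(ℝ²)}^{1 - 2/p}, for a constant C(p) depending only on p. -/
open MeasureTheory

open ENNReal
open scoped NNReal



lemma lyap {α : Type*} [MeasurableSpace α] {μ : Measure α} {g : α → ℝ≥0∞}
    (hg : AEMeasurable g μ) {p q r θ : ℝ} (hq : 0 < q) (hr : 0 < r)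
    (hθ0 : 0 < θ) (hθ1 : θ < 1) (hp : 0 < p) (hpqr : 1/p = θ/q + (1-θ)/r) :
    (∫⁻ x, g x ^ p ∂μ) ^ (1/p) ≤
      ((∫⁻ x, g x ^ q ∂μ) ^ (1/q)) ^ θ * ((∫⁻ x, g x ^ r ∂μ) ^ (1/r)) ^ (1-θ) := by
  have hθp : 0 < θ * p := by positivity
  have h1θ : 0 < 1 - θ := by linarith
  have h1θp : 0 < (1-θ) * p := by positivity
  have hθpq : θ * p < q := by
    have h1 : θ / q < 1 / p := by
      have : 0 < (1-θ)/r := by positivity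
      linarith
    rw [div_lt_div_iff₀ hq hp] at h1
    linarith
  have hconj : Real.HolderConjugate (q/(θ*p)) (r/((1-θ)*p)) := by
    rw [Real.holderConjugate_iff]
    constructor
    · rw [lt_div_iff₀ hθp]; linarith
    · rw [inv_div, inv_div]
      field_simp
      field_simp at hpqr
      nlinarith [hpqr]
  have key : (∫⁻ x, g x ^ p ∂μ) ≤
      (∫⁻ x, g x ^ q ∂μ) ^ (θ*p/q) * (∫⁻ x, g x ^ r ∂μ) ^ ((1-θ)*p/r) := by
    calc (∫⁻ x, g x ^ p ∂μ) = ∫⁻ x, (g x ^ (θ*p)) * (g x ^ ((1-θ)*p)) ∂μ := by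
          apply lintegral_congr; intro x
          rw [← ENNReal.rpow_add_of_nonneg _ _ hθp.le h1θp.le]
          congr 1; ring
      _ ≤ (∫⁻ x, (g x ^ (θ*p)) ^ (q/(θ*p)) ∂μ) ^ (1/(q/(θ*p))) *
          (∫⁻ x, (g x ^ ((1-θ)*p)) ^ (r/((1-θ)*p)) ∂μ) ^ (1/(r/((1-θ)*p))) :=
          ENNReal.lintegral_mul_le_Lp_mul_Lq μ hconj (hg.pow_const _) (hg.pow_const _)
      _ = (∫⁻ x, g x ^ q ∂μ) ^ (θ*p/q) * (∫⁻ x, g x ^ r ∂μ) ^ ((1-θ)*p/r) := by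
          rw [one_div_div, one_div_div]
          congr 1 <;> congr 1 <;> apply lintegral_congr <;> intro x <;>
            rw [← ENNReal.rpow_mul] <;> congr 1 <;> field_simp
  calc (∫⁻ x, g x ^ p ∂μ) ^ (1/p)
      ≤ ((∫⁻ x, g x ^ q ∂μ) ^ (θ*p/q) * (∫⁻ x, g x ^ r ∂μ) ^ ((1-θ)*p/r)) ^ (1/p) :=
        ENNReal.rpow_le_rpow key (by positivity)
    _ = ((∫⁻ x, g x ^ q ∂μ) ^ (1/q)) ^ θ * ((∫⁻ x, g x ^ r ∂μ) ^ (1/r)) ^ (1-θ) := by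
        rw [ENNReal.mul_rpow_of_nonneg _ _ (by positivity), ← ENNReal.rpow_mul,
          ← ENNReal.rpow_mul, ← ENNReal.rpow_mul, ← ENNReal.rpow_mul]
        congr 1 <;> congr 1 <;> field_simp <;> ring


noncomputable def myC : ℝ≥0 := eLpNormLESNormFDerivOneConst (volume : Measure (Fin 2 → ℝ)) 2

lemma step {γ : ℝ≥0} (hγ : 1 < γ) (f : (Fin 2 → ℝ) → ℝ)
    (hf : ContDiff ℝ 1 f) (h2f : HasCompactSupport f) :
    (∫⁻ x, (‖f x‖₊ : ℝ≥0∞) ^ (2*(γ:ℝ))) ^ ((1:ℝ)/2) ≤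
      ((myC+1) * γ : ℝ≥0) * (∫⁻ x, (‖f x‖₊ : ℝ≥0∞) ^ (2*((γ:ℝ)-1))) ^ ((1:ℝ)/2) *
        (∫⁻ x, (‖fderiv ℝ f x‖₊ : ℝ≥0∞) ^ (2:ℝ)) ^ ((1:ℝ)/2) := by
  have h1γ : 1 < (γ:ℝ) := hγ
  have h0γ : (γ:ℝ) ≠ 0 := by positivity
  set v : (Fin 2 → ℝ) → ℝ := fun x ↦ ‖f x‖ ^ (γ:ℝ) with hv_def
  have hv : ContDiff ℝ 1 v := by rw [hv_def]; exact hf.norm_rpow h1γ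
  have h2v : HasCompactSupport v := h2f.norm.rpow_const h0γ
  have hn : NNReal.HolderConjugate (Module.finrank ℝ (Fin 2 → ℝ)) 2 := by
    rw [Module.finrank_fin_fun]
    constructor <;> norm_num
  have hcont := hf.continuous
  have hcontd := (hf.fderiv_right (m := 0) le_rfl).continuous
  have hnv : ∀ x, (‖v x‖₊ : ℝ≥0∞) = (‖f x‖₊ : ℝ≥0∞) ^ (γ:ℝ) := by
    intro x
    rw [hv_def]
    simp only
    rw [Real.nnnorm_rpow_of_nonneg (norm_nonneg _), nnnorm_norm,
      ENNReal.coe_rpow_of_nonneg _ (by positivity)]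
  have hL : eLpNorm v 2 volume = (∫⁻ x, (‖f x‖₊ : ℝ≥0∞) ^ (2*(γ:ℝ))) ^ ((1:ℝ)/2) := by
    rw [show ((2:ℝ≥0∞)) = ((2:ℝ≥0) : ℝ≥0∞) by norm_cast,
      eLpNorm_nnreal_eq_lintegral (by norm_num)]
    push_cast
    congr 1
    · apply lintegral_congr; intro x
      rw [enorm_eq_nnnorm, hnv x, ← ENNReal.rpow_mul, mul_comm]
  have sob : eLpNorm v 2 volume ≤ myC * eLpNorm (fderiv ℝ v) 1 volume :=
    eLpNorm_le_eLpNorm_fderiv_one volume hv h2v hn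
  have key : eLpNorm (fderiv ℝ v) 1 volume ≤
      (γ : ℝ≥0∞) * ((∫⁻ x, (‖f x‖₊ : ℝ≥0∞) ^ (2*((γ:ℝ)-1))) ^ ((1:ℝ)/2) *
        (∫⁻ x, (‖fderiv ℝ f x‖₊ : ℝ≥0∞) ^ (2:ℝ)) ^ ((1:ℝ)/2)) := by
    rw [eLpNorm_one_eq_lintegral_enorm]
    calc ∫⁻ x, (‖fderiv ℝ v x‖₊ : ℝ≥0∞) ∂volume
        ≤ ∫⁻ x, (γ : ℝ≥0∞) * ((‖f x‖₊ : ℝ≥0∞) ^ ((γ:ℝ)-1) * (‖fderiv ℝ f x‖₊ : ℝ≥0∞)) ∂volume := by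
          apply lintegral_mono; intro x
          have := nnnorm_fderiv_norm_rpow_le (hf.differentiable one_ne_zero) (x := x) hγ
          calc (‖fderiv ℝ v x‖₊ : ℝ≥0∞) ≤ ((γ * ‖f x‖₊ ^ ((γ:ℝ) - 1) * ‖fderiv ℝ f x‖₊ : ℝ≥0) : ℝ≥0∞) := by
                exact_mod_cast this
            _ = (γ : ℝ≥0∞) * ((‖f x‖₊ : ℝ≥0∞) ^ ((γ:ℝ)-1) * (‖fderiv ℝ f x‖₊ : ℝ≥0∞)) := by
                push_cast [ENNReal.coe_rpow_of_nonneg _ (by linarith : (0:ℝ) ≤ (γ:ℝ)-1)]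
                ring
      _ = (γ : ℝ≥0∞) * ∫⁻ x, (‖f x‖₊ : ℝ≥0∞) ^ ((γ:ℝ)-1) * (‖fderiv ℝ f x‖₊ : ℝ≥0∞) ∂volume :=
          lintegral_const_mul' _ _ (by simp)
      _ ≤ (γ : ℝ≥0∞) * ((∫⁻ x, ((‖f x‖₊ : ℝ≥0∞) ^ ((γ:ℝ)-1)) ^ (2:ℝ)) ^ ((1:ℝ)/2) *
            (∫⁻ x, (‖fderiv ℝ f x‖₊ : ℝ≥0∞) ^ (2:ℝ)) ^ ((1:ℝ)/2)) := by
          gcongr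
          apply ENNReal.lintegral_mul_le_Lp_mul_Lq volume (Real.holderConjugate_iff.mpr ⟨one_lt_two, by norm_num⟩) <;> fun_prop
      _ = (γ : ℝ≥0∞) * ((∫⁻ x, (‖f x‖₊ : ℝ≥0∞) ^ (2*((γ:ℝ)-1))) ^ ((1:ℝ)/2) *
            (∫⁻ x, (‖fderiv ℝ f x‖₊ : ℝ≥0∞) ^ (2:ℝ)) ^ ((1:ℝ)/2)) := by
          have hx : ∀ x : Fin 2 → ℝ, ((‖f x‖₊:ℝ≥0∞) ^ ((γ:ℝ)-1)) ^ (2:ℝ)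
              = (‖f x‖₊:ℝ≥0∞) ^ (2*((γ:ℝ)-1)) := fun x => by
            rw [← ENNReal.rpow_mul]; ring_nf
          simp_rw [hx]
  calc (∫⁻ x, (‖f x‖₊ : ℝ≥0∞) ^ (2*(γ:ℝ))) ^ ((1:ℝ)/2) = eLpNorm v 2 volume := hL.symm
    _ ≤ myC * eLpNorm (fderiv ℝ v) 1 volume := sob
    _ ≤ (myC : ℝ≥0∞) * ((γ : ℝ≥0∞) * ((∫⁻ x, (‖f x‖₊ : ℝ≥0∞) ^ (2*((γ:ℝ)-1))) ^ ((1:ℝ)/2) *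
          (∫⁻ x, (‖fderiv ℝ f x‖₊ : ℝ≥0∞) ^ (2:ℝ)) ^ ((1:ℝ)/2))) := by gcongr
    _ ≤ ((myC:ℝ≥0∞)+1) * ((γ : ℝ≥0∞) * ((∫⁻ x, (‖f x‖₊ : ℝ≥0∞) ^ (2*((γ:ℝ)-1))) ^ ((1:ℝ)/2) *
          (∫⁻ x, (‖fderiv ℝ f x‖₊ : ℝ≥0∞) ^ (2:ℝ)) ^ ((1:ℝ)/2))) := by
        gcongr ?_ * _
        exact le_self_add
    _ = ((myC+1) * γ : ℝ≥0) * (∫⁻ x, (‖f x‖₊ : ℝ≥0∞) ^ (2*((γ:ℝ)-1))) ^ ((1:ℝ)/2) *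
        (∫⁻ x, (‖fderiv ℝ f x‖₊ : ℝ≥0∞) ^ (2:ℝ)) ^ ((1:ℝ)/2) := by
        push_cast; ring

lemma iter (k : ℕ) (hk : 1 ≤ k) : ∃ C : ℝ≥0, 0 < C ∧
    ∀ f : (Fin 2 → ℝ) → ℝ, ContDiff ℝ 1 f → HasCompactSupport f →
      (∫⁻ x, (‖f x‖₊ : ℝ≥0∞) ^ (2*(k:ℝ))) ^ ((1:ℝ)/2) ≤
        (C : ℝ≥0∞) * (∫⁻ x, (‖f x‖₊ : ℝ≥0∞) ^ (2:ℝ)) ^ ((1:ℝ)/2) *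
          ((∫⁻ x, (‖fderiv ℝ f x‖₊ : ℝ≥0∞) ^ (2:ℝ)) ^ ((1:ℝ)/2)) ^ ((k:ℝ)-1) := by
  induction k with
  | zero => omega
  | succ n ih =>
    rcases Nat.eq_or_lt_of_le hk with h1 | h1
    · refine ⟨1, one_pos, fun f hf h2f => ?_⟩
      have hn : n = 0 := by omega
      subst hn
      simp [ENNReal.rpow_zero]
    · have hn1 : 1 ≤ n := by omega
      obtain ⟨C, hC, hIH⟩ := ih hn1
      refine ⟨(myC+1) * (n+1) * C, by positivity, fun f hf h2f => ?_⟩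
      have hst := step (γ := (n:ℝ≥0)+1) (by exact_mod_cast Nat.lt_succ_of_le hn1 : (1:ℝ≥0) < n+1) f hf h2f
      have hcast1 : (((n:ℝ≥0)+1 : ℝ≥0) : ℝ) = ((n+1 : ℕ) : ℝ) := by push_cast; ring
      have hcast2 : (2:ℝ)*((((n:ℝ≥0)+1 : ℝ≥0):ℝ)-1) = 2*(n:ℝ) := by push_cast; ring
      rw [hcast2, hcast1] at hst
      calc (∫⁻ x, (‖f x‖₊ : ℝ≥0∞) ^ (2*((n+1:ℕ):ℝ))) ^ ((1:ℝ)/2)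
          ≤ (((myC+1) * ((n:ℝ≥0)+1) : ℝ≥0) : ℝ≥0∞) * (∫⁻ x, (‖f x‖₊ : ℝ≥0∞) ^ (2*(n:ℝ))) ^ ((1:ℝ)/2) *
            (∫⁻ x, (‖fderiv ℝ f x‖₊ : ℝ≥0∞) ^ (2:ℝ)) ^ ((1:ℝ)/2) := hst
        _ ≤ (((myC+1) * ((n:ℝ≥0)+1) : ℝ≥0) : ℝ≥0∞) *
              ((C : ℝ≥0∞) * (∫⁻ x, (‖f x‖₊ : ℝ≥0∞) ^ (2:ℝ)) ^ ((1:ℝ)/2) *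
                ((∫⁻ x, (‖fderiv ℝ f x‖₊ : ℝ≥0∞) ^ (2:ℝ)) ^ ((1:ℝ)/2)) ^ ((n:ℝ)-1)) *
            (∫⁻ x, (‖fderiv ℝ f x‖₊ : ℝ≥0∞) ^ (2:ℝ)) ^ ((1:ℝ)/2) := by
            gcongr
            exact hIH f hf h2f
        _ = (((myC+1) * (n+1) * C : ℝ≥0) : ℝ≥0∞) * (∫⁻ x, (‖f x‖₊ : ℝ≥0∞) ^ (2:ℝ)) ^ ((1:ℝ)/2) *
            ((∫⁻ x, (‖fderiv ℝ f x‖₊ : ℝ≥0∞) ^ (2:ℝ)) ^ ((1:ℝ)/2)) ^ (((n+1:ℕ):ℝ)-1) := by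
            set D := (∫⁻ x, (‖fderiv ℝ f x‖₊ : ℝ≥0∞) ^ (2:ℝ)) ^ ((1:ℝ)/2) with hD
            have : D ^ ((n:ℝ)-1) * D ^ (1:ℝ) = D ^ (((n+1:ℕ):ℝ)-1) := by
              rw [← ENNReal.rpow_add_of_nonneg _ _ (by simpa using sub_nonneg.mpr (Nat.one_le_cast.mpr hn1 : (1:ℝ) ≤ n)) zero_le_one]
              congr 1; push_cast; ring
            rw [← this, ENNReal.rpow_one]
            push_cast
            ring

/-- Gagliardo–Nirenberg in ℝ²:
`‖f‖_{L^p} ≤ C(p) ‖f‖_{L²}^{2/p} ‖∇f‖_{L²}^{1-2/p}` for `2 ≤ p < ∞`. -/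
theorem stmt3 (p : ℝ) (hp : 2 ≤ p) :
    ∃ C > 0, ∀ f : (Fin 2 → ℝ) → ℝ, ContDiff ℝ (⊤ : ℕ∞) f → HasCompactSupport f →
      eLpNorm f (ENNReal.ofReal p) volume ≤
        ENNReal.ofReal C * eLpNorm f 2 volume ^ (2 / p) *
          eLpNorm (fun x => ‖fderiv ℝ f x‖) 2 volume ^ (1 - 2 / p) := by
  have hp0 : (0:ℝ) < p := by linarith
  rcases eq_or_lt_of_le hp with rfl | hp2
  · -- p = 2
    refine ⟨1, one_pos, fun f hf h2f => ?_⟩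
    have : ENNReal.ofReal 2 = (2 : ℝ≥0∞) := by
      rw [ENNReal.ofReal_ofNat]
    rw [this]
    simp only [div_self (two_ne_zero (α := ℝ)), sub_self, ENNReal.rpow_one, ENNReal.rpow_zero,
      ENNReal.ofReal_one, one_mul, mul_one]
    exact le_rfl
  · -- p > 2
    set k : ℕ := ⌈p/2⌉₊ + 1 with hk_def
    have hkceil : (1:ℕ) ≤ ⌈p/2⌉₊ := Nat.one_le_ceil_iff.mpr (by linarith)
    have hk1 : 1 ≤ k := by omega
    have hk2R : (2:ℝ) ≤ (k:ℝ) := by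
      have : (2:ℕ) ≤ k := by omega
      exact_mod_cast this
    have hk0 : (k:ℝ) ≠ 0 := by positivity
    have hpk : p < 2*(k:ℝ) := by
      have h1 : p/2 ≤ (⌈p/2⌉₊ : ℝ) := Nat.le_ceil _
      have h2 : (k:ℝ) = (⌈p/2⌉₊ : ℝ) + 1 := by rw [hk_def]; push_cast; ring
      linarith
    set θ : ℝ := (2*(k:ℝ)/p - 1)/((k:ℝ)-1) with hθ_def
    have hden : (0:ℝ) < (k:ℝ) - 1 := by linarith
    have hθ0 : 0 < θ := by
      apply div_pos _ hden
      rw [sub_pos, lt_div_iff₀ hp0]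
      linarith
    have hθ1 : θ < 1 := by
      rw [hθ_def, div_lt_one hden, sub_lt_sub_iff_right, div_lt_iff₀ hp0]
      nlinarith
    have hpqr : 1/p = θ/2 + (1-θ)/(2*(k:ℝ)) := by
      rw [hθ_def]
      field_simp
      ring
    obtain ⟨C₁, hC₁, hIter⟩ := iter k hk1
    set M : ℝ≥0 := max C₁ 1 with hM_def
    refine ⟨(M:ℝ), by positivity, fun f hf h2f => ?_⟩
    have hf1 : ContDiff ℝ 1 f := hf.of_le (by simp)
    have hg : AEMeasurable (fun x => (‖f x‖₊ : ℝ≥0∞)) volume := by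
      have := hf1.continuous
      fun_prop
    set I2 : ℝ≥0∞ := ∫⁻ x, (‖f x‖₊ : ℝ≥0∞) ^ (2:ℝ) with hI2
    set Ik : ℝ≥0∞ := ∫⁻ x, (‖f x‖₊ : ℝ≥0∞) ^ (2*(k:ℝ)) with hIk
    set JD : ℝ≥0∞ := (∫⁻ x, (‖fderiv ℝ f x‖₊ : ℝ≥0∞) ^ (2:ℝ)) ^ ((1:ℝ)/2) with hJD
    have hF : eLpNorm f 2 volume = I2 ^ ((1:ℝ)/2) := by
      rw [eLpNorm_eq_lintegral_rpow_enorm_toReal two_ne_zero (by norm_num), hI2]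
      simp only [enorm_eq_nnnorm]
      norm_num
    have hD : eLpNorm (fun x => ‖fderiv ℝ f x‖) 2 volume = JD := by
      rw [eLpNorm_norm, eLpNorm_eq_lintegral_rpow_enorm_toReal two_ne_zero (by norm_num), hJD]
      simp only [enorm_eq_nnnorm]
      norm_num
    have hP : eLpNorm f (ENNReal.ofReal p) volume = (∫⁻ x, (‖f x‖₊ : ℝ≥0∞) ^ p) ^ (1/p) := by
      rw [eLpNorm_eq_lintegral_rpow_enorm_toReal (by simp [hp0]) ENNReal.ofReal_ne_top,
        ENNReal.toReal_ofReal hp0.le]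
      simp only [enorm_eq_nnnorm]
    have hlyap := lyap (μ := volume) hg (q := 2) (r := 2*(k:ℝ)) (θ := θ)
      two_pos (by positivity) hθ0 hθ1 hp0 hpqr
    have hiter := hIter f hf1 h2f
    -- combine
    have hAk : Ik ^ ((1:ℝ)/(2*(k:ℝ))) ≤
        ((C₁:ℝ≥0∞) * I2 ^ ((1:ℝ)/2) * JD ^ ((k:ℝ)-1)) ^ ((1:ℝ)/(k:ℝ)) := by
      have h12 : (1:ℝ)/(2*(k:ℝ)) = ((1:ℝ)/2) * ((1:ℝ)/(k:ℝ)) := by field_simp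
      rw [h12, ENNReal.rpow_mul]
      exact ENNReal.rpow_le_rpow hiter (by positivity)
    have hsplit : ((C₁:ℝ≥0∞) * I2 ^ ((1:ℝ)/2) * JD ^ ((k:ℝ)-1)) ^ ((1:ℝ)/(k:ℝ)) =
        (C₁:ℝ≥0∞) ^ ((1:ℝ)/(k:ℝ)) * (I2 ^ ((1:ℝ)/2)) ^ ((1:ℝ)/(k:ℝ)) *
          JD ^ (((k:ℝ)-1)/(k:ℝ)) := by
      rw [ENNReal.mul_rpow_of_nonneg _ _ (by positivity),
        ENNReal.mul_rpow_of_nonneg _ _ (by positivity), ← ENNReal.rpow_mul JD]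
      congr 1
      field_simp
    have e1 : θ + (1-θ)/(k:ℝ) = 2/p := by
      have := hpqr
      field_simp at this ⊢
      linarith
    have e2 : ((k:ℝ)-1)/(k:ℝ) * (1-θ) = 1 - 2/p := by
      have h2p : 2/p = θ + (1-θ)/(k:ℝ) := e1.symm
      rw [h2p]
      field_simp
      ring
    calc eLpNorm f (ENNReal.ofReal p) volume
        = (∫⁻ x, (‖f x‖₊ : ℝ≥0∞) ^ p) ^ (1/p) := hP
      _ ≤ (I2 ^ ((1:ℝ)/2)) ^ θ * (Ik ^ ((1:ℝ)/(2*(k:ℝ)))) ^ (1-θ) := by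
          convert hlyap using 3 <;> norm_num
      _ ≤ (I2 ^ ((1:ℝ)/2)) ^ θ * ((C₁:ℝ≥0∞) ^ ((1:ℝ)/(k:ℝ)) * (I2 ^ ((1:ℝ)/2)) ^ ((1:ℝ)/(k:ℝ)) *
            JD ^ (((k:ℝ)-1)/(k:ℝ))) ^ (1-θ) := by
          have h1θ : (0:ℝ) ≤ 1 - θ := by linarith
          gcongr
          rw [← hsplit]
          exact hAk
      _ = ((C₁:ℝ≥0∞) ^ ((1:ℝ)/(k:ℝ))) ^ (1-θ) *
            ((I2 ^ ((1:ℝ)/2)) ^ θ * ((I2 ^ ((1:ℝ)/2)) ^ ((1:ℝ)/(k:ℝ))) ^ (1-θ)) *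
            (JD ^ (((k:ℝ)-1)/(k:ℝ))) ^ (1-θ) := by
          rw [ENNReal.mul_rpow_of_nonneg _ _ (by linarith : (0:ℝ) ≤ 1-θ),
            ENNReal.mul_rpow_of_nonneg _ _ (by linarith : (0:ℝ) ≤ 1-θ)]
          ring
      _ = ((C₁:ℝ≥0∞) ^ (((1:ℝ)/(k:ℝ)) * (1-θ))) *
            (I2 ^ ((1:ℝ)/2)) ^ (2/p) * JD ^ (1 - 2/p) := by
          rw [← ENNReal.rpow_mul (C₁:ℝ≥0∞), ← ENNReal.rpow_mul (I2 ^ ((1:ℝ)/2)),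
            ← ENNReal.rpow_mul JD,
            ← ENNReal.rpow_add_of_nonneg _ _ hθ0.le (mul_nonneg (by positivity) (by linarith))]
          rw [show θ + 1/(k:ℝ) * (1-θ) = 2/p by rw [← e1]; ring,
            show ((k:ℝ)-1)/(k:ℝ) * (1-θ) = 1 - 2/p from e2]
      _ ≤ (M : ℝ≥0∞) * (I2 ^ ((1:ℝ)/2)) ^ (2/p) * JD ^ (1 - 2/p) := by
          gcongr ?_ * _ * _
          calc (C₁:ℝ≥0∞) ^ (((1:ℝ)/(k:ℝ)) * (1-θ))
              ≤ (M:ℝ≥0∞) ^ (((1:ℝ)/(k:ℝ)) * (1-θ)) :=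
                ENNReal.rpow_le_rpow (ENNReal.coe_le_coe.mpr (le_max_left _ _))
                  (mul_nonneg (by positivity) (by linarith))
            _ ≤ (M:ℝ≥0∞) ^ (1:ℝ) := by
                apply ENNReal.rpow_le_rpow_of_exponent_le
                · exact_mod_cast ENNReal.coe_le_coe.mpr (le_max_right _ _)
                · have h1k : (1:ℝ)/(k:ℝ) ≤ 1 := by
                    rw [div_le_one (by positivity)]; linarith
                  nlinarith
            _ = (M:ℝ≥0∞) := ENNReal.rpow_one _
      _ = ENNReal.ofReal (M:ℝ) * eLpNorm f 2 volume ^ (2 / p) *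
            eLpNorm (fun x => ‖fderiv ℝ f x‖) 2 volume ^ (1 - 2 / p) := by
          rw [hF, hD, ENNReal.ofReal_coe_nnreal]
end

section
/- Let C₁, C₂, C₃, C₄, C₅ > 0 and let y : [0,∞) → [0,∞) be continuous with y(0) = 0. Suppose that for every T ≥ 0, y(T) ≤ δ C₁ e^{C₂ y(T)} e^{C₃ δ y(T) e^{C₄ y(T)}} + C₅, where 0 < δ ≤ min{ e^{-2C₄C₅}/(2 C₃ C₅), C₅ e^{-2C₂C₅ - 1}/(2 C₁) }. Then y(T) < 2 C₅ for all T ≥ 0. -/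
/-- bootstrap argument closing the a priori estimates. -/
theorem stmt6 (C₁ C₂ C₃ C₄ C₅ δ : ℝ)
    (h₁ : 0 < C₁) (h₂ : 0 < C₂) (h₃ : 0 < C₃) (h₄ : 0 < C₄) (h₅ : 0 < C₅)
    (hδpos : 0 < δ)
    (hδ : δ ≤ min (Real.exp (-(2 * C₄ * C₅)) / (2 * C₃ * C₅))
      (C₅ * Real.exp (-(2 * C₂ * C₅) - 1) / (2 * C₁)))
    (y : ℝ → ℝ) (hy : Continuous y) (hy0 : y 0 = 0)
    (hynn : ∀ T, 0 ≤ T → 0 ≤ y T)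
    (hineq : ∀ T, 0 ≤ T →
      y T ≤ δ * C₁ * Real.exp (C₂ * y T) *
        Real.exp (C₃ * δ * y T * Real.exp (C₄ * y T)) + C₅) :
    ∀ T, 0 ≤ T → y T < 2 * C₅ := by
  by_contra h
  push_neg at h
  obtain ⟨T, hT, hyT⟩ := h
  have hIVT : (2 * C₅) ∈ Set.Icc (y 0) (y T) := by
    constructor
    · rw [hy0]; positivity
    · exact hyT
  obtain ⟨t, ht, heq⟩ := intermediate_value_Icc hT hy.continuousOn hIVT
  have hin := hineq t ht.1
  rw [heq] at hin
  have hδ1 : δ ≤ Real.exp (-(2 * C₄ * C₅)) / (2 * C₃ * C₅) :=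
    hδ.trans (min_le_left _ _)
  have hδ2 : δ ≤ C₅ * Real.exp (-(2 * C₂ * C₅) - 1) / (2 * C₁) :=
    hδ.trans (min_le_right _ _)
  have hd1 : δ * (2 * C₃ * C₅) ≤ Real.exp (-(2 * C₄ * C₅)) :=
    (le_div_iff₀ (by positivity)).mp hδ1
  have hd2 : δ * (2 * C₁) ≤ C₅ * Real.exp (-(2 * C₂ * C₅) - 1) :=
    (le_div_iff₀ (by positivity)).mp hδ2
  have e1 : Real.exp (-(2 * C₄ * C₅)) * Real.exp (C₄ * (2 * C₅)) = 1 := by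
    rw [← Real.exp_add]
    have : -(2 * C₄ * C₅) + C₄ * (2 * C₅) = 0 := by ring
    rw [this, Real.exp_zero]
  have hE1 : C₃ * δ * (2 * C₅) * Real.exp (C₄ * (2 * C₅)) ≤ 1 := by
    have := mul_le_mul_of_nonneg_right hd1 (Real.exp_pos (C₄ * (2 * C₅))).le
    nlinarith [Real.exp_pos (C₄ * (2 * C₅))]
  have hE1' : Real.exp (C₃ * δ * (2 * C₅) * Real.exp (C₄ * (2 * C₅))) ≤ Real.exp 1 :=
    Real.exp_le_exp.mpr hE1
  have e2 : Real.exp (-(2 * C₂ * C₅) - 1) * Real.exp (C₂ * (2 * C₅)) = Real.exp (-1) := by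
    rw [← Real.exp_add]
    congr 1
    ring
  have hE2 : δ * C₁ * Real.exp (C₂ * (2 * C₅)) ≤ C₅ / 2 * Real.exp (-1) := by
    have := mul_le_mul_of_nonneg_right hd2 (Real.exp_pos (C₂ * (2 * C₅))).le
    nlinarith [Real.exp_pos (C₂ * (2 * C₅))]
  have hprod : δ * C₁ * Real.exp (C₂ * (2 * C₅)) *
      Real.exp (C₃ * δ * (2 * C₅) * Real.exp (C₄ * (2 * C₅))) ≤ C₅ / 2 := by
    have hle : δ * C₁ * Real.exp (C₂ * (2 * C₅)) *
        Real.exp (C₃ * δ * (2 * C₅) * Real.exp (C₄ * (2 * C₅))) ≤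
        (C₅ / 2 * Real.exp (-1)) * Real.exp 1 := by
      apply mul_le_mul hE2 hE1' (Real.exp_pos _).le (by positivity)
    have : (C₅ / 2 * Real.exp (-1)) * Real.exp 1 = C₅ / 2 := by
      rw [mul_assoc, ← Real.exp_add]
      norm_num
    linarith
  linarith
end
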